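/- arXiv:1709.05540 — 5 statements merged into one kernel-verified Lean document; each statement's English description precedes it below -/
import Mathlib

section
/- If m is a positive integer with m > 2×10^31, then the number of squarefree divisors of m satisfies W(m) < m^(2/9), where W(m) = 2^(ω(m)) and ω(m) is the number of distinct prime divisors of m. -/
open Finset

private lemma nthp {n p : ℕ} (hp : Nat.Prime p) (hc : Nat.count Nat.Prime p = n) :
    Nat.nth Nat.Prime n = p := hc ▸ Nat.nth_count hp

private lemma prime_inf : {p | Nat.Prime p}.Infinite := by
  simpa only [Nat.prime_iff] using Nat.infinite_setOf_prime

/-- Any finset of primes has product at least the product of the first `card` primes. -/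
private lemma prod_nth_le_prod :
    ∀ (S : Finset ℕ), (∀ p ∈ S, Nat.Prime p) →
      ∏ i ∈ Finset.range S.card, Nat.nth Nat.Prime i ≤ ∏ p ∈ S, p := by
  intro S
  induction S using Finset.strongInduction with
  | _ S ih =>
    intro hS
    rcases S.eq_empty_or_nonempty with rfl | hne
    · simp
    · set p := S.max' hne with hp
      have hpS : p ∈ S := S.max'_mem hne
      have hcard : S.card = (S.erase p).card + 1 := by
        rw [Finset.card_erase_of_mem hpS]
        have : 0 < S.card := Finset.card_pos.mpr hne
        omega
      have hkey : Nat.nth Nat.Prime ((S.erase p).card) ≤ p := by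
        have hsub : S ⊆ Finset.filter (fun n => Nat.Prime n) (Finset.range (p + 1)) := by
          intro q hq
          simp only [Finset.mem_filter, Finset.mem_range, Nat.lt_succ_iff]
          exact ⟨S.le_max' q hq, hS q hq⟩
        have h1 : S.card ≤ Nat.count Nat.Prime (p + 1) := by
          rw [Nat.count_eq_card_filter_range]
          exact Finset.card_le_card hsub
        have h2 := Nat.nth_lt_of_lt_count (p := Nat.Prime) (n := p + 1)
          (k := (S.erase p).card) (by omega)
        omega
      calc ∏ i ∈ Finset.range S.card, Nat.nth Nat.Prime i
          = (∏ i ∈ Finset.range (S.erase p).card, Nat.nth Nat.Prime i) *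
              Nat.nth Nat.Prime ((S.erase p).card) := by
            rw [hcard, Finset.prod_range_succ]
        _ ≤ (∏ q ∈ S.erase p, q) * p :=
            Nat.mul_le_mul
              (ih (S.erase p) (Finset.erase_ssubset hpS)
                (fun q hq => hS q (Finset.mem_of_mem_erase hq))) hkey
        _ = ∏ q ∈ S, q := Finset.prod_erase_mul S _ hpS

private lemma primorial_gt (k : ℕ) (hk : 24 ≤ k) :
    2 ^ (9 * k) < (∏ i ∈ Finset.range k, Nat.nth Nat.Prime i) ^ 2 := by
  induction k, hk using Nat.le_induction with
  | base =>
    have h0 : Nat.nth Nat.Prime 0 = 2 := nthp (by norm_num) (by decide)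
    have h1 : Nat.nth Nat.Prime 1 = 3 := nthp (by norm_num) (by decide)
    have h2 : Nat.nth Nat.Prime 2 = 5 := nthp (by norm_num) (by decide)
    have h3 : Nat.nth Nat.Prime 3 = 7 := nthp (by norm_num) (by decide)
    have h4 : Nat.nth Nat.Prime 4 = 11 := nthp (by norm_num) (by decide)
    have h5 : Nat.nth Nat.Prime 5 = 13 := nthp (by norm_num) (by decide)
    have h6 : Nat.nth Nat.Prime 6 = 17 := nthp (by norm_num) (by decide)
    have h7 : Nat.nth Nat.Prime 7 = 19 := nthp (by norm_num) (by decide)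
    have h8 : Nat.nth Nat.Prime 8 = 23 := nthp (by norm_num) (by decide)
    have h9 : Nat.nth Nat.Prime 9 = 29 := nthp (by norm_num) (by decide)
    have h10 : Nat.nth Nat.Prime 10 = 31 := nthp (by norm_num) (by decide)
    have h11 : Nat.nth Nat.Prime 11 = 37 := nthp (by norm_num) (by decide)
    have h12 : Nat.nth Nat.Prime 12 = 41 := nthp (by norm_num) (by decide)
    have h13 : Nat.nth Nat.Prime 13 = 43 := nthp (by norm_num) (by decide)
    have h14 : Nat.nth Nat.Prime 14 = 47 := nthp (by norm_num) (by decide)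
    have h15 : Nat.nth Nat.Prime 15 = 53 := nthp (by norm_num) (by decide)
    have h16 : Nat.nth Nat.Prime 16 = 59 := nthp (by norm_num) (by decide)
    have h17 : Nat.nth Nat.Prime 17 = 61 := nthp (by norm_num) (by decide)
    have h18 : Nat.nth Nat.Prime 18 = 67 := nthp (by norm_num) (by decide)
    have h19 : Nat.nth Nat.Prime 19 = 71 := nthp (by norm_num) (by decide)
    have h20 : Nat.nth Nat.Prime 20 = 73 := nthp (by norm_num) (by decide)
    have h21 : Nat.nth Nat.Prime 21 = 79 := nthp (by norm_num) (by decide)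
    have h22 : Nat.nth Nat.Prime 22 = 83 := nthp (by norm_num) (by decide)
    have h23 : Nat.nth Nat.Prime 23 = 89 := nthp (by norm_num) (by decide)
    have hprod : ∏ i ∈ Finset.range 24, Nat.nth Nat.Prime i =
        23768741896345550770650537601358310 := by
      simp [Finset.prod_range_succ, h0, h1, h2, h3, h4, h5, h6, h7, h8, h9, h10, h11,
        h12, h13, h14, h15, h16, h17, h18, h19, h20, h21, h22, h23]
    rw [hprod]
    norm_num
  | succ k hk ih =>
    have h8 : Nat.nth Nat.Prime 8 = 23 := nthp (by norm_num) (by decide)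
    have hnth : 23 ≤ Nat.nth Nat.Prime k := by
      rw [← h8]
      exact (Nat.nth_le_nth prime_inf).mpr (by omega)
    rw [Finset.prod_range_succ, mul_pow]
    calc 2 ^ (9 * (k + 1)) = 2 ^ (9 * k) * 512 := by ring
      _ < (∏ i ∈ Finset.range k, Nat.nth Nat.Prime i) ^ 2 * 512 := by
          exact (Nat.mul_lt_mul_right (by norm_num)).mpr ih
      _ ≤ (∏ i ∈ Finset.range k, Nat.nth Nat.Prime i) ^ 2 * Nat.nth Nat.Prime k ^ 2 := by
          refine Nat.mul_le_mul_left _ ?_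
          calc (512 : ℕ) ≤ 23 ^ 2 := by norm_num
            _ ≤ Nat.nth Nat.Prime k ^ 2 := Nat.pow_le_pow_left hnth 2

theorem squarefree_divisor_count_lt_rpow_two_ninths
    (m : ℕ) (hm : 2 * 10 ^ 31 < m) :
    ((2 : ℝ) ^ m.primeFactors.card) < (m : ℝ) ^ ((2 : ℝ) / 9) := by
  set k := m.primeFactors.card with hk
  have hm0 : 0 < m := by omega
  -- the key natural number inequality
  have hnat : 2 ^ (9 * k) < m ^ 2 := by
    rcases le_or_gt k 23 with hle | hgt
    · calc 2 ^ (9 * k) ≤ 2 ^ 207 := Nat.pow_le_pow_right (by norm_num) (by omega)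
        _ < (2 * 10 ^ 31) ^ 2 := by norm_num
        _ ≤ m ^ 2 := Nat.pow_le_pow_left (by omega) 2
    · have hprodle : ∏ p ∈ m.primeFactors, p ≤ m :=
        Nat.le_of_dvd hm0 (Nat.prod_primeFactors_dvd m)
      have hprim := prod_nth_le_prod m.primeFactors (fun p hp => Nat.prime_of_mem_primeFactors hp)
      calc 2 ^ (9 * k) < (∏ i ∈ Finset.range k, Nat.nth Nat.Prime i) ^ 2 :=
            primorial_gt k (by omega)
        _ ≤ (∏ p ∈ m.primeFactors, p) ^ 2 := Nat.pow_le_pow_left hprim 2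
        _ ≤ m ^ 2 := Nat.pow_le_pow_left hprodle 2
  -- pass to the reals
  have hreal : ((2 : ℝ) ^ k) ^ (9 : ℕ) < ((m : ℝ) ^ ((2 : ℝ) / 9)) ^ (9 : ℕ) := by
    have hcast : ((2 : ℝ)) ^ (9 * k) < (m : ℝ) ^ 2 := by
      exact_mod_cast hnat
    have hL : ((2 : ℝ) ^ k) ^ (9 : ℕ) = (2 : ℝ) ^ (9 * k) := by
      rw [← pow_mul, Nat.mul_comm]
    have hR : ((m : ℝ) ^ ((2 : ℝ) / 9)) ^ (9 : ℕ) = (m : ℝ) ^ 2 := by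
      rw [← Real.rpow_natCast ((m : ℝ) ^ ((2 : ℝ) / 9)) 9, ← Real.rpow_mul (Nat.cast_nonneg m),
        show ((2 : ℝ) / 9) * (9 : ℕ) = ((2 : ℕ) : ℝ) by norm_num, Real.rpow_natCast]
    rw [hL, hR]
    exact hcast
  exact lt_of_pow_lt_pow_left₀ 9 (Real.rpow_nonneg (Nat.cast_nonneg m) _) hreal
end

section
/- If m is a positive integer with ω(m) ≥ 149 distinct prime divisors, then W(m) < m^(1/8), where W(m) = 2^(ω(m)). -/
set_option maxRecDepth 100000
set_option maxHeartbeats 10000000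
set_option exponentiation.threshold 2000

/-- The set of the first 149 primes (all primes below 860). -/
def primesT : Finset ℕ := {2,3,5,7,11,13,17,19,23,29,31,37,41,43,47,53,59,61,67,71,73,79,83,89,97,101,103,107,109,113,127,131,137,139,149,151,157,163,167,173,179,181,191,193,197,199,211,223,227,229,233,239,241,251,257,263,269,271,277,281,283,293,307,311,313,317,331,337,347,349,353,359,367,373,379,383,389,397,401,409,419,421,431,433,439,443,449,457,461,463,467,479,487,491,499,503,509,521,523,541,547,557,563,569,571,577,587,593,599,601,607,613,617,619,631,641,643,647,653,659,661,673,677,683,691,701,709,719,727,733,739,743,751,757,761,769,773,787,797,809,811,821,823,827,829,839,853,857,859}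

lemma primesT_card : primesT.card = 149 := by decide

lemma primesT_facts : ∀ p ∈ primesT,
    2 ≤ p ∧ p < 860 ∧ ∀ m ∈ Finset.Ico 2 30, m = p ∨ ¬ m ∣ p := by decide

lemma primesT_prime : ∀ p ∈ primesT, p.Prime := by
  intro p hp
  obtain ⟨h2, hlt, hdiv⟩ := primesT_facts p hp
  rw [Nat.prime_def_le_sqrt]
  refine ⟨h2, fun m hm2 hmsq hdvd => ?_⟩
  have hmsq' : m * m ≤ p := by
    calc m * m ≤ Nat.sqrt p * Nat.sqrt p := Nat.mul_le_mul hmsq hmsq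
    _ ≤ p := by rw [← pow_two]; exact Nat.sqrt_le' p
  have hm30 : m < 30 := by nlinarith
  have hmp : m ≠ p := by nlinarith
  rcases hdiv m (Finset.mem_Ico.mpr ⟨hm2, hm30⟩) with h | h
  · exact hmp h
  · exact h hdvd

lemma primesT_closure : ∀ n, n < 860 → n.Prime → n ∈ primesT := by
  have h1 : ∀ n ∈ Finset.Ico 2 300, n ∈ primesT ∨
      ∃ p ∈ ({2,3,5,7,11,13,17,19,23,29} : Finset ℕ), p ∣ n ∧ p ≠ n := by decide
  have h2 : ∀ n ∈ Finset.Ico 300 600, n ∈ primesT ∨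
      ∃ p ∈ ({2,3,5,7,11,13,17,19,23,29} : Finset ℕ), p ∣ n ∧ p ≠ n := by decide
  have h3 : ∀ n ∈ Finset.Ico 600 860, n ∈ primesT ∨
      ∃ p ∈ ({2,3,5,7,11,13,17,19,23,29} : Finset ℕ), p ∣ n ∧ p ≠ n := by decide
  intro n hlt hn
  have h2n : 2 ≤ n := hn.two_le
  have key : n ∈ primesT ∨
      ∃ p ∈ ({2,3,5,7,11,13,17,19,23,29} : Finset ℕ), p ∣ n ∧ p ≠ n := by
    rcases lt_or_ge n 300 with h | h
    · exact h1 n (Finset.mem_Ico.mpr ⟨h2n, h⟩)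
    · rcases lt_or_ge n 600 with h' | h'
      · exact h2 n (Finset.mem_Ico.mpr ⟨h, h'⟩)
      · exact h3 n (Finset.mem_Ico.mpr ⟨h', hlt⟩)
  rcases key with h | ⟨p, hpmem, hpdvd, hpne⟩
  · exact h
  · exfalso
    have hp2 : 2 ≤ p := by fin_cases hpmem <;> norm_num
    rcases (Nat.Prime.eq_one_or_self_of_dvd hn p hpdvd) with h | h <;> omega

lemma primesT_prod : 2 ^ 1192 < ∏ p ∈ primesT, p := by decide

/-- Key lemma: any finset of at least 149 primes has product exceeding `2^(8k)`. -/
lemma prod_primes_gt (S : Finset ℕ) (hS : ∀ p ∈ S, p.Prime)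
    (hc : 149 ≤ S.card) : 2 ^ (8 * S.card) < ∏ p ∈ S, p := by
  classical
  set T := primesT with hTdef
  have hAB : (∏ p ∈ S ∩ T, p) * ∏ p ∈ S \ T, p = ∏ p ∈ S, p :=
    Finset.prod_inter_mul_prod_diff S T (fun p => p)
  have hCD : (∏ p ∈ T ∩ S, p) * ∏ p ∈ T \ S, p = ∏ p ∈ T, p :=
    Finset.prod_inter_mul_prod_diff T S (fun p => p)
  have hic : T ∩ S = S ∩ T := Finset.inter_comm T S
  have c1 : (S ∩ T).card + (S \ T).card = S.card := Finset.card_inter_add_card_sdiff S T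
  have c2 : (T ∩ S).card + (T \ S).card = T.card := Finset.card_inter_add_card_sdiff T S
  have hTcard : T.card = 149 := primesT_card
  have hcc : (T ∩ S).card = (S ∩ T).card := by rw [hic]
  set a := (S ∩ T).card
  set b := (S \ T).card
  set c := (T \ S).card
  have hcb : c ≤ b := by omega
  have hbig : ∀ p ∈ S \ T, 860 ≤ p := by
    intro p hp
    rcases Finset.mem_sdiff.mp hp with ⟨hpS, hpT⟩
    by_contra h
    exact hpT (primesT_closure p (by omega) (hS p hpS))
  have hsmall : ∀ p ∈ T \ S, p ≤ 860 := by
    intro p hp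
    have := (primesT_facts p (Finset.mem_sdiff.mp hp).1).2.1
    omega
  have h1 : (860 : ℕ) ^ b ≤ ∏ p ∈ S \ T, p :=
    Finset.pow_card_le_prod _ _ _ hbig
  have h2 : ∏ p ∈ T \ S, p ≤ 860 ^ c :=
    Finset.prod_le_pow_card _ _ _ hsmall
  have hpow : 2 ^ (8 * (b - c)) ≤ 860 ^ (b - c) := by
    calc 2 ^ (8 * (b - c)) = (2 ^ 8) ^ (b - c) := by rw [pow_mul]
    _ ≤ 860 ^ (b - c) := Nat.pow_le_pow_left (by norm_num) _
  have hexp : 8 * S.card = 1192 + 8 * (b - c) := by omega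
  have hsplit : (860 : ℕ) ^ b = 860 ^ c * 860 ^ (b - c) := by
    rw [← pow_add]; congr 1; omega
  calc 2 ^ (8 * S.card) = 2 ^ 1192 * 2 ^ (8 * (b - c)) := by rw [hexp, pow_add]
    _ < (∏ p ∈ T, p) * 2 ^ (8 * (b - c)) :=
        mul_lt_mul_of_pos_right primesT_prod (by positivity)
    _ = (∏ p ∈ S ∩ T, p) * (∏ p ∈ T \ S, p) * 2 ^ (8 * (b - c)) := by
        rw [← hCD, hic]
    _ ≤ (∏ p ∈ S ∩ T, p) * 860 ^ c * 2 ^ (8 * (b - c)) :=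
        Nat.mul_le_mul_right _ (Nat.mul_le_mul_left _ h2)
    _ ≤ (∏ p ∈ S ∩ T, p) * 860 ^ c * 860 ^ (b - c) :=
        Nat.mul_le_mul_left _ hpow
    _ = (∏ p ∈ S ∩ T, p) * 860 ^ b := by rw [hsplit, mul_assoc]
    _ ≤ (∏ p ∈ S ∩ T, p) * ∏ p ∈ S \ T, p := Nat.mul_le_mul_left _ h1
    _ = ∏ p ∈ S, p := hAB

theorem squarefree_divisor_count_lt_rpow_one_eighth
    (m : ℕ) (hm : 0 < m) (hω : 149 ≤ m.primeFactors.card) :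
    ((2 : ℝ) ^ m.primeFactors.card) < (m : ℝ) ^ ((1 : ℝ) / 8) := by
  have hmain := prod_primes_gt m.primeFactors
    (fun p hp => Nat.prime_of_mem_primeFactors hp) hω
  have hprod : ∏ p ∈ m.primeFactors, p ≤ m :=
    Nat.le_of_dvd hm (Nat.prod_primeFactors_dvd m)
  have hnat : 2 ^ (8 * m.primeFactors.card) < m := lt_of_lt_of_le hmain hprod
  set k := m.primeFactors.card
  have hm0 : (0:ℝ) ≤ (m:ℝ) := Nat.cast_nonneg m
  have h8 : ((2:ℝ) ^ k) ^ (8:ℕ) < ((m:ℝ) ^ ((1:ℝ)/8)) ^ (8:ℕ) := by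
    have hL : ((2:ℝ) ^ k) ^ (8:ℕ) = ((2 ^ (8 * k) : ℕ) : ℝ) := by
      rw [← pow_mul]
      push_cast
      ring
    have hR : ((m:ℝ) ^ ((1:ℝ)/8)) ^ (8:ℕ) = (m:ℝ) := by
      rw [← Real.rpow_natCast ((m:ℝ) ^ ((1:ℝ)/8)) 8, ← Real.rpow_mul hm0]
      norm_num
    rw [hL, hR]
    exact_mod_cast hnat
  exact lt_of_pow_lt_pow_left₀ 8 (Real.rpow_nonneg hm0 _) h8
end

section
/- Let n ≥ 3 be an integer such that 2^n - 1 is a (Mersenne) prime with 2^n - 1 ≥ 7. Then for every a in F_2, there exists a primitive element α of the field F_{2^n} such that α + α^{-1} is also a primitive element of F_{2^n} and Tr_{F_{2^n}/F_2}(α) = a. -/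
theorem mersenne_prime_primitive_pair_with_trace
    (n : ℕ) (hn : 3 ≤ n) (hp : Nat.Prime (2 ^ n - 1)) (h7 : 7 ≤ 2 ^ n - 1)
    (K : Type*) [Field K] [Fintype K] [Algebra (ZMod 2) K]
    (hcard : Fintype.card K = 2 ^ n) (a : ZMod 2) :
    ∃ α : K, orderOf α = 2 ^ n - 1 ∧ orderOf (α + α⁻¹) = 2 ^ n - 1 ∧
      Algebra.trace (ZMod 2) K α = a := by
  classical
  have : Module.Finite (ZMod 2) K := Module.Finite.of_finite
  -- characteristic-2 facts
  have hself : ∀ x : K, x + x = 0 := by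
    intro x
    have h := (algebraMap (ZMod 2) K).map_add 1 1
    have h0 : ((1 : ZMod 2) + 1) = 0 := by decide
    rw [h0, map_zero, map_one] at h
    calc x + x = (1 + 1) * x := by ring
    _ = 0 := by rw [← h]; ring
  have h2 : (2 : K) = 0 := by linear_combination hself 1
  have hneg : ∀ x : K, -x = x := by
    intro x; rw [neg_eq_iff_add_eq_zero]; exact hself x
  -- order of any element ≠ 0, 1 is 2^n - 1
  have hord : ∀ x : K, x ≠ 0 → x ≠ 1 → orderOf x = 2 ^ n - 1 := by
    intro x hx0 hx1
    have hpow : x ^ (2 ^ n - 1) = 1 := by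
      rw [← hcard]; exact FiniteField.pow_card_sub_one_eq_one x hx0
    have hd : orderOf x ∣ 2 ^ n - 1 := orderOf_dvd_of_pow_eq_one hpow
    rcases (Nat.Prime.eq_one_or_self_of_dvd hp _ hd) with h | h
    · exact absurd (orderOf_eq_one_iff.mp h) hx1
    · exact h
  -- trace is a nonzero linear map, hence surjective onto ZMod 2
  set T := Algebra.trace (ZMod 2) K with hT
  have hTne : T ≠ 0 := Algebra.trace_ne_zero (ZMod 2) K
  obtain ⟨y, hy⟩ : ∃ y : K, T y ≠ 0 := by
    by_contra h
    push_neg at h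
    exact hTne (by ext x; simpa using h x)
  have hcases : ∀ b : ZMod 2, b = 0 ∨ b = 1 := by decide
  have hy1 : T y = 1 := by
    rcases hcases (T y) with h | h
    · exact absurd h hy
    · exact h
  -- pick x₀ with T x₀ = a
  obtain ⟨x₀, hx₀⟩ : ∃ x₀ : K, T x₀ = a := by
    rcases hcases a with h | h
    · exact ⟨0, by simp [h]⟩
    · exact ⟨y, by rw [hy1, h]⟩
  have hsurj : Function.Surjective T := by
    intro b
    rcases hcases b with h | h
    · exact ⟨0, by simp [h]⟩
    · exact ⟨y, by rw [hy1, h]⟩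
  -- the kernel of T has at least 3 elements
  have hkercard : Nat.card (LinearMap.ker T) * 2 = 2 ^ n := by
    have h1 : Nat.card (K ⧸ LinearMap.ker T) = 2 := by
      have e := T.quotKerEquivRange
      rw [Nat.card_congr e.toEquiv, LinearMap.range_eq_top.mpr hsurj]
      rw [Nat.card_congr Submodule.topEquiv.toEquiv]
      simp [Nat.card_eq_fintype_card]
    have hq := AddSubgroup.card_eq_card_quotient_mul_card_addSubgroup
        ((LinearMap.ker T).toAddSubgroup)
    have h3 : Nat.card (K ⧸ (LinearMap.ker T).toAddSubgroup)
        = Nat.card (K ⧸ LinearMap.ker T) := Nat.card_congr (Equiv.refl _)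
    have h4 : Nat.card ((LinearMap.ker T).toAddSubgroup)
        = Nat.card (LinearMap.ker T) := rfl
    rw [h3, h1, h4] at hq
    rw [Nat.card_eq_fintype_card, hcard] at hq
    omega
  have h8 : 8 ≤ 2 ^ n := by
    calc (8 : ℕ) = 2 ^ 3 := by norm_num
    _ ≤ 2 ^ n := Nat.pow_le_pow_right (by norm_num) hn
  have hker3 : 3 ≤ (((LinearMap.ker T : Set K)).toFinset).card := by
    rw [Set.toFinset_card]
    have hcc : Fintype.card (LinearMap.ker T : Set K) = Nat.card (LinearMap.ker T) := by
      rw [← Nat.card_eq_fintype_card]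
      exact Nat.card_congr (Equiv.setCongr rfl)
    omega
  -- find k in the kernel avoiding two forbidden values
  have hforb : ¬ ((LinearMap.ker T : Set K).toFinset ⊆ ({-x₀, 1 - x₀} : Finset K)) := by
    intro hsub
    have hle1 := Finset.card_le_card hsub
    have hle : ({-x₀, 1 - x₀} : Finset K).card ≤ 2 :=
      (Finset.card_insert_le _ _).trans (by simp)
    omega
  obtain ⟨k, hkmem, hknot⟩ := Finset.not_subset.mp hforb
  have hk : T k = 0 := by
    have := Set.mem_toFinset.mp hkmem
    simpa using this
  simp only [Finset.mem_insert, Finset.mem_singleton] at hknot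
  push_neg at hknot
  -- our element
  set α := x₀ + k with hα
  have hα0 : α ≠ 0 := by
    intro h
    exact hknot.1 (by linear_combination h)
  have hα1 : α ≠ 1 := by
    intro h
    exact hknot.2 (by linear_combination h)
  have hordα : orderOf α = 2 ^ n - 1 := hord α hα0 hα1
  refine ⟨α, hordα, ?_, ?_⟩
  · -- order of α + α⁻¹
    have hinv : α * α⁻¹ = 1 := mul_inv_cancel₀ hα0
    have hinvl : α⁻¹ * α = 1 := inv_mul_cancel₀ hα0
    have hβ0 : α + α⁻¹ ≠ 0 := by
      intro h
      have hinv' : α⁻¹ = α := by linear_combination -h - hneg α⁻¹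
      have hsq : α * α = 1 := by rw [← hinv, hinv']
      have hz : (α + 1) * (α + 1) = 0 := by
        linear_combination hsq + α * h2 + h2
      have h1 : α + 1 = 0 := by
        rcases mul_eq_zero.mp hz with h' | h' <;> exact h'
      exact hα1 (by linear_combination h1 - h2)
    have hβ1 : α + α⁻¹ ≠ 1 := by
      intro h
      have h' : (α + α⁻¹) * α = α := by rw [h]; ring
      have hsq : α * α = α + 1 := by linear_combination h' - hinvl - h2
      have hcube : α ^ 3 = 1 := by linear_combination α * hsq + hsq + α * h2
      have hdvd : orderOf α ∣ 3 := orderOf_dvd_of_pow_eq_one hcube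
      rw [hordα] at hdvd
      have := Nat.le_of_dvd (by norm_num) hdvd
      omega
    exact hord _ hβ0 hβ1
  · rw [hα, map_add, hx₀, hk, add_zero]
end

section
/- Let q be a prime power, n a positive integer, and suppose x^{n_1 + q^n - 1 - n_2}(x^2+1)^{n_2} = y·H(x)^{q^n - 1} as polynomials in F_{q^n}[x] for some y ∈ F_{q^n}, H ∈ F_{q^n}[x], and integers 0 ≤ n_1, n_2 < q^n - 1. Then n_1 = n_2 = 0. -/
open Polynomial

lemma rm_pow {F : Type*} [CommRing F] [IsDomain F] (a : F) (p : F[X]) (hp : p ≠ 0) (k : ℕ) :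
    rootMultiplicity a (p ^ k) = k * rootMultiplicity a p := by
  induction k with
  | zero => simp [rootMultiplicity_eq_zero]
  | succ k ih =>
    rw [pow_succ, rootMultiplicity_mul (mul_ne_zero (pow_ne_zero _ hp) hp), ih]
    ring

theorem exponents_zero_of_poly_power_eq
    (q n : ℕ) (hq : ∃ p k, Nat.Prime p ∧ 0 < k ∧ q = p ^ k) (hn : 0 < n)
    (K : Type*) [Field K] [Fintype K] (hcard : Fintype.card K = q ^ n)
    (n₁ n₂ : ℕ) (h₁ : n₁ < q ^ n - 1) (h₂ : n₂ < q ^ n - 1)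
    (y : K) (H : K[X])
    (heq : (X : K[X]) ^ (n₁ + q ^ n - 1 - n₂) * (X ^ 2 + 1) ^ n₂
        = C y * H ^ (q ^ n - 1)) :
    n₁ = 0 ∧ n₂ = 0 := by
  set Q := q ^ n with hQdef
  have hQ2 : 2 ≤ Q := by
    have h := Fintype.one_lt_card (α := K); omega
  set e := n₁ + Q - 1 - n₂ with he
  have he' : e = n₁ + (Q - 1) - n₂ := by omega
  -- pass to algebraic closure
  set L := AlgebraicClosure K
  set φ := algebraMap K L
  have heq' : (X : L[X]) ^ e * (X ^ 2 + 1) ^ n₂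
      = C (φ y) * (H.map φ) ^ (Q - 1) := by
    have := congrArg (Polynomial.map φ) heq
    simpa [Polynomial.map_mul, Polynomial.map_pow, Polynomial.map_add] using this
  have hX2 : (X ^ 2 + 1 : L[X]) ≠ 0 := by
    intro h
    have := congrArg (fun p => Polynomial.coeff p 0) h
    simp at this
  have hlhs : (X : L[X]) ^ e * (X ^ 2 + 1) ^ n₂ ≠ 0 :=
    mul_ne_zero (pow_ne_zero _ X_ne_zero) (pow_ne_zero _ hX2)
  have hy : φ y ≠ 0 := by
    intro h; rw [h] at heq'
    rw [map_zero, zero_mul] at heq'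
    exact hlhs heq'
  have hH : H.map φ ≠ 0 := by
    intro h; rw [h, zero_pow (show Q - 1 ≠ 0 by omega), mul_zero] at heq'
    exact hlhs heq'
  -- root multiplicity at 0
  have hrm0 : e = (Q - 1) * rootMultiplicity (0 : L) (H.map φ) := by
    have lhs0 : rootMultiplicity (0 : L) ((X : L[X]) ^ e * (X ^ 2 + 1) ^ n₂) = e := by
      rw [rootMultiplicity_mul (by rw [heq'] at hlhs ⊢; exact hlhs),
        rm_pow _ _ X_ne_zero, rm_pow _ _ hX2,
        rootMultiplicity_eq_zero (p := (X:L[X])^2+1) (by simp [IsRoot]),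
        show rootMultiplicity (0:L) (X : L[X]) = 1 by
          simpa using rootMultiplicity_X_sub_C_self (x := (0:L))]
      ring
    rw [heq', rootMultiplicity_mul (heq' ▸ hlhs), rootMultiplicity_C,
      rm_pow _ _ hH] at lhs0
    omega
  have hn₁ : n₁ < Q - 1 := h₁
  have hn₂ : n₂ < Q - 1 := h₂
  have heQ : e = Q - 1 := by
    have hle1 : 1 ≤ e := by omega
    have hle2 : e < 2 * (Q - 1) := by omega
    rcases Nat.lt_or_ge (rootMultiplicity (0 : L) (H.map φ)) 2 with h | h
    · have h' : rootMultiplicity (0:L) (H.map φ) = 0 ∨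
          rootMultiplicity (0:L) (H.map φ) = 1 := by omega
      rcases h' with h' | h' <;> rw [h'] at hrm0 <;> omega
    · exfalso
      have := Nat.mul_le_mul_left (Q - 1) h
      omega
  have hn12 : n₁ = n₂ := by omega
  -- root α of X^2+1
  obtain ⟨α, hα⟩ := IsAlgClosed.exists_pow_nat_eq (k := L) (-1) zero_lt_two
  have hα0 : α ≠ 0 := by intro h; rw [h] at hα; simp at hα
  have hfact : (X ^ 2 + 1 : L[X]) = (X - C α) * (X + C α) := by
    have h : (X - C α) * (X + C α) = X ^ 2 - C α ^ 2 := by ring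
    rw [h, ← C_pow, hα]; simp
  have hrmα : n₂ + n₂ * rootMultiplicity α (X + C α : L[X])
      = (Q - 1) * rootMultiplicity α (H.map φ) := by
    have lhsα : rootMultiplicity α ((X : L[X]) ^ e * (X ^ 2 + 1) ^ n₂)
        = n₂ + n₂ * rootMultiplicity α (X + C α : L[X]) := by
      rw [rootMultiplicity_mul (by rw [heq'] at hlhs ⊢; exact hlhs),
        rm_pow _ _ X_ne_zero, rm_pow _ _ hX2,
        rootMultiplicity_eq_zero (p := (X:L[X])) (by simp [IsRoot, hα0]),
        hfact, rootMultiplicity_mul (hfact ▸ hX2),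
        rootMultiplicity_X_sub_C_self]
      ring
    rw [heq', rootMultiplicity_mul (heq' ▸ hlhs), rootMultiplicity_C,
      rm_pow _ _ hH] at lhsα
    omega
  have hdvd : (Q - 1) ∣ n₂ := by
    by_cases hαα : α = -α
    · -- characteristic 2 case
      have h2α : (2 : L) * α = 0 := by linear_combination hαα
      have h2L : (2 : L) = 0 := by
        rcases mul_eq_zero.mp h2α with h | h
        · exact h
        · exact absurd h hα0
      have h2K : (2 : K) = 0 := by
        apply φ.injective (a₁ := (2 : K)) (a₂ := 0)
        rw [map_zero, map_ofNat]; exact h2L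
      have hring : ringChar K = 2 := by
        have hd : ringChar K ∣ 2 := ringChar.dvd (by exact_mod_cast h2K)
        have hp : (ringChar K).Prime := CharP.char_is_prime K _
        exact (Nat.prime_dvd_prime_iff_eq hp Nat.prime_two).mp hd
      haveI : CharP K 2 := hring ▸ ringChar.charP K
      obtain ⟨m, -, hm⟩ := FiniteField.card K 2
      have hQeven : 2 ∣ Q := by
        have h : 2 ∣ Fintype.card K := by
          rw [hm]; exact dvd_pow_self 2 m.pos.ne'
        exact hcard ▸ h
      have hone : rootMultiplicity α (X + C α : L[X]) = 1 := by
        have h : (X + C α : L[X]) = X - C α := by rw [sub_eq_add_neg, ← C_neg, ← hαα]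
        rw [h, rootMultiplicity_X_sub_C_self]
      rw [hone, mul_one] at hrmα
      have h2 : (Q - 1) ∣ n₂ * 2 := ⟨rootMultiplicity α (H.map φ), by omega⟩
      have hodd : Nat.Coprime (Q - 1) 2 := by
        rcases hQeven with ⟨t, ht⟩
        exact Nat.coprime_two_right.mpr ⟨t - 1, by omega⟩
      exact hodd.dvd_of_dvd_mul_right h2
    · have h0 : rootMultiplicity α (X + C α : L[X]) = 0 := by
        apply rootMultiplicity_eq_zero
        simp only [IsRoot, eval_add, eval_X, eval_C]
        intro h
        exact hαα (by linear_combination h)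
      rw [h0, mul_zero, add_zero] at hrmα
      exact ⟨_, hrmα⟩
  have hn₂0 : n₂ = 0 := by
    rcases hdvd with ⟨c, hc⟩
    rcases Nat.eq_zero_or_pos c with h | h
    · rw [h, mul_zero] at hc; exact hc
    · exfalso
      have := Nat.le_mul_of_pos_right (Q - 1) h
      omega
  exact ⟨by omega, hn₂0⟩
end

section
/- Let q be a prime power, n ≥ 3, a ∈ F_q, l a divisor of q^n - 1, and p_1, ..., p_r the distinct primes dividing q^n - 1 but not l. Let N_a(l_1, l_2) denote the number of α ∈ F_{q^n}^* such that α is l_1-free, α + α^{-1} is l_2-free, and Tr_{F_{q^n}/F_q}(α) = a. Then N_a(q^n - 1, q^n - 1) ≥ Σ_{i=1}^{r} N_a(p_i l, l) + Σ_{i=1}^{r} N_a(l, p_i l) − (2r − 1) N_a(l, l). -/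
open scoped Classical

/-- `ξ` is `e`-free in the field `K`: any representation `ξ = γ ^ d` with `d ∣ e`
forces `d = 1`. -/
def IsEFree (K : Type*) [Field K] (e : ℕ) (ξ : K) : Prop :=
  ∀ (d : ℕ) (γ : K), d ∣ e → ξ = γ ^ d → d = 1

/-- The number of `α ∈ F_{q^n}^*` such that `α` is `l₁`-free, `α + α⁻¹` is
`l₂`-free and `Tr(α) = a`. -/
noncomputable def Ntr (F K : Type*) [Field F] [Field K] [Fintype K] [Algebra F K]
    (a : F) (l₁ l₂ : ℕ) : ℕ :=
  (Finset.univ.filter fun α : Kˣ =>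
    IsEFree K l₁ (α : K) ∧ IsEFree K l₂ ((α : K) + (α : K)⁻¹) ∧
      Algebra.trace F K (α : K) = a).card

/-! The `2r` sets counted by `N_a(p_i l, l)` and `N_a(l, p_i l)` lie in the set `S` counted by
`N_a(l, l)`, and an element of `S` lying in all of them is counted by `N_a(q^n - 1, q^n - 1)`,
because `e`-freeness is tested prime by prime. What remains is the Bonferroni bound
`|T| ≥ ∑ |C_i| - (k - 1) |S|` for `k` subsets `C_i` of `S` whose intersection lies in `T`,
checked pointwise: an element missing some `C_i` contributes at most `k - 1` to the sum. -/

section Sieve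

open Finset

variable {ι α : Type*}

theorem Finset.sum_boole_sub_card_sub_one_le (I : Finset ι) (p : ι → Prop) [DecidablePred p]
    (q : Prop) [Decidable q] (h : (∀ i ∈ I, p i) → q) :
    ∑ i ∈ I, (if p i then (1 : ℤ) else 0) - (#I - 1) ≤ if q then 1 else 0 := by
  rw [sum_boole]
  by_cases hall : ∀ i ∈ I, p i
  · rw [if_pos (h hall), filter_true_of_mem hall]
    simp
  · push Not at hall
    have hlt : #{i ∈ I | p i} < #I := card_lt_card (filter_ssubset.2 hall)
    split_ifs <;> omega

theorem Finset.sum_card_sub_le_card_of_forall_mem [DecidableEq α] {I : Finset ι}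
    {S T : Finset α} {C : ι → Finset α} (hC : ∀ i ∈ I, C i ⊆ S)
    (hT : ∀ x ∈ S, (∀ i ∈ I, x ∈ C i) → x ∈ T) :
    ∑ i ∈ I, (#(C i) : ℤ) - (#I - 1) * #S ≤ #T := by
  have hcount : ∀ i ∈ I, (#(C i) : ℤ) = ∑ x ∈ S, if x ∈ C i then 1 else 0 := by
    intro i hi
    rw [sum_boole, filter_mem_eq_inter, inter_eq_right.2 (hC i hi)]
  calc ∑ i ∈ I, (#(C i) : ℤ) - (#I - 1) * #S
      = ∑ x ∈ S, (∑ i ∈ I, (if x ∈ C i then (1 : ℤ) else 0) - (#I - 1)) := by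
        rw [sum_congr rfl hcount, sum_comm, sum_sub_distrib, sum_const, nsmul_eq_mul]
        ring
    _ ≤ ∑ x ∈ S, if x ∈ T then (1 : ℤ) else 0 :=
        sum_le_sum fun x hx => sum_boole_sub_card_sub_one_le I _ _ (hT x hx)
    _ = #(S.filter (· ∈ T)) := by rw [sum_boole]
    _ ≤ #T := by exact_mod_cast card_le_card fun x hx => (mem_filter.1 hx).2

end Sieve

section EFree

variable {K : Type*} [Field K]

theorem IsEFree.of_dvd {e₁ e₂ : ℕ} (h : e₁ ∣ e₂) {ξ : K} (hξ : IsEFree K e₂ ξ) :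
    IsEFree K e₁ ξ :=
  fun d γ hd => hξ d γ (hd.trans h)

/-- Freeness is a condition prime by prime: if `ξ = γ ^ d` with `d ≠ 1`, then `ξ` is also a
`p`-th power for the smallest prime factor `p` of `d`. -/
theorem isEFree_of_forall_prime {e : ℕ} {ξ : K}
    (h : ∀ p, p.Prime → p ∣ e → IsEFree K p ξ) : IsEFree K e ξ := by
  intro d γ hd hξ
  by_contra hd1
  have hp : d.minFac.Prime := Nat.minFac_prime hd1
  obtain ⟨m, hm⟩ := Nat.minFac_dvd d
  have hξ' : ξ = (γ ^ m) ^ d.minFac := by rw [hξ, ← pow_mul, mul_comm, ← hm]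
  exact hp.ne_one (h _ hp ((Nat.minFac_dvd d).trans hd) _ _ dvd_rfl hξ')

theorem isEFree_of_forall_mem_isEFree_mul {e l : ℕ} {P : Finset ℕ}
    (hP : ∀ p, p.Prime → p ∣ e → ¬ p ∣ l → p ∈ P) {ξ : K} (hl : IsEFree K l ξ)
    (hPl : ∀ p ∈ P, IsEFree K (p * l) ξ) : IsEFree K e ξ :=
  isEFree_of_forall_prime fun p hp hpe => by
    by_cases hpl : p ∣ l
    · exact hl.of_dvd hpl
    · exact (hPl p (hP p hp hpe hpl)).of_dvd (dvd_mul_right p l)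

end EFree

section TraceFree

variable (F K : Type*) [Field F] [Field K] [Fintype K] [Algebra F K]

noncomputable def trFreeSet (a : F) (l₁ l₂ : ℕ) : Finset Kˣ :=
  Finset.univ.filter fun α : Kˣ =>
    IsEFree K l₁ (α : K) ∧ IsEFree K l₂ ((α : K) + (α : K)⁻¹) ∧
      Algebra.trace F K (α : K) = a

variable {F K}

theorem card_trFreeSet (a : F) (l₁ l₂ : ℕ) : (trFreeSet F K a l₁ l₂).card = Ntr F K a l₁ l₂ :=
  rfl

theorem mem_trFreeSet {a : F} {l₁ l₂ : ℕ} {α : Kˣ} :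
    α ∈ trFreeSet F K a l₁ l₂ ↔
      IsEFree K l₁ (α : K) ∧ IsEFree K l₂ ((α : K) + (α : K)⁻¹) ∧
        Algebra.trace F K (α : K) = a := by
  simp [trFreeSet]

theorem trFreeSet_mono {a : F} {l₁ l₂ m₁ m₂ : ℕ} (h₁ : l₁ ∣ m₁) (h₂ : l₂ ∣ m₂) :
    trFreeSet F K a m₁ m₂ ⊆ trFreeSet F K a l₁ l₂ := fun _ hα => by
  obtain ⟨hα₁, hα₂, hαa⟩ := mem_trFreeSet.1 hα
  exact mem_trFreeSet.2 ⟨hα₁.of_dvd h₁, hα₂.of_dvd h₂, hαa⟩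

end TraceFree

theorem sieve_inequality_general
    (q n : ℕ)
    (F K : Type*) [Field F] [Field K] [Fintype K] [Algebra F K]
    (a : F) (l : ℕ) (P : Finset ℕ)
    (hP : ∀ p, p ∈ P ↔ p.Prime ∧ p ∣ q ^ n - 1 ∧ ¬ p ∣ l) :
    (Ntr F K a (q ^ n - 1) (q ^ n - 1) : ℤ) ≥
      (∑ p ∈ P, (Ntr F K a (p * l) l : ℤ)) +
      (∑ p ∈ P, (Ntr F K a l (p * l) : ℤ)) -
      (2 * P.card - 1) * Ntr F K a l l := by
  set C : ℕ ⊕ ℕ → Finset Kˣ :=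
    Sum.elim (fun p => trFreeSet F K a (p * l) l) (fun p => trFreeSet F K a l (p * l))
  have hC : ∀ i ∈ P.disjSum P, C i ⊆ trFreeSet F K a l l := by
    rintro (p | p) -
    · exact trFreeSet_mono (dvd_mul_left l p) dvd_rfl
    · exact trFreeSet_mono dvd_rfl (dvd_mul_left l p)
  have hT : ∀ α ∈ trFreeSet F K a l l, (∀ i ∈ P.disjSum P, α ∈ C i) →
      α ∈ trFreeSet F K a (q ^ n - 1) (q ^ n - 1) := by
    intro α hα hαC
    obtain ⟨hα₁, hα₂, hαa⟩ := mem_trFreeSet.1 hα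
    have hP' : ∀ p, p.Prime → p ∣ q ^ n - 1 → ¬ p ∣ l → p ∈ P :=
      fun p hp hpe hpl => (hP p).2 ⟨hp, hpe, hpl⟩
    refine mem_trFreeSet.2 ⟨isEFree_of_forall_mem_isEFree_mul hP' hα₁ fun p hp => ?_,
      isEFree_of_forall_mem_isEFree_mul hP' hα₂ fun p hp => ?_, hαa⟩
    · exact (mem_trFreeSet.1 (hαC (.inl p) (Finset.inl_mem_disjSum.2 hp))).1
    · exact (mem_trFreeSet.1 (hαC (.inr p) (Finset.inr_mem_disjSum.2 hp))).2.1
  have hsieve := Finset.sum_card_sub_le_card_of_forall_mem hC hT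
  rw [Finset.sum_disjSum, Finset.card_disjSum] at hsieve
  simp only [C, Sum.elim_inl, Sum.elim_inr, card_trFreeSet] at hsieve
  push_cast at hsieve
  linarith

theorem sieve_inequality
    (q n : ℕ) (hq : ∃ p k, Nat.Prime p ∧ 0 < k ∧ q = p ^ k) (hn : 3 ≤ n)
    (F K : Type*) [Field F] [Fintype F] [Field K] [Fintype K] [Algebra F K]
    (hF : Fintype.card F = q) (hK : Fintype.card K = q ^ n)
    (a : F) (l : ℕ) (hl : l ∣ q ^ n - 1) (P : Finset ℕ)
    (hP : ∀ p, p ∈ P ↔ p.Prime ∧ p ∣ q ^ n - 1 ∧ ¬ p ∣ l) :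
    (Ntr F K a (q ^ n - 1) (q ^ n - 1) : ℤ) ≥
      (∑ p ∈ P, (Ntr F K a (p * l) l : ℤ)) +
      (∑ p ∈ P, (Ntr F K a l (p * l) : ℤ)) -
      (2 * P.card - 1) * Ntr F K a l l :=
  sieve_inequality_general q n F K a l P hP
end
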